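/- Let R be a Noetherian ring, I an ideal, and W a multiplicative set. Then the inner integral closure of the ideal I·W⁻¹R in W⁻¹R equals the expansion to W⁻¹R of the inner integral closure of I in R. -/

import Mathlib

/-- The integral closure of an ideal `I`: elements `x` satisfying a monic equation
`x^d + a 1 * x^(d-1) + ... + a d = 0` with `a j ∈ I^j` for `1 ≤ j ≤ d`. -/
def Ideal.intClosure {R : Type*} [CommRing R] (I : Ideal R) : Set R :=
  {x | ∃ (d : ℕ) (a : ℕ → R), 0 < d ∧ (∀ j, 1 ≤ j → j ≤ d → a j ∈ I ^ j) ∧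
    x ^ d + ∑ j ∈ Finset.Icc 1 d, a j * x ^ (d - j) = 0}

/-- The inner integral closure of an ideal `I`:
`{ r | ∃ n ≥ 1, r ^ n ∈ integral closure of I ^ (n+1) }`. -/
def Ideal.innerIntClosure {R : Type*} [CommRing R] (I : Ideal R) : Set R :=
  {r | ∃ n : ℕ, 1 ≤ n ∧ r ^ n ∈ (I ^ (n + 1)).intClosure}


/-!
Via the Rees algebra `R[It] ⊆ R[t]`, an element `z` lies in the integral closure of `I ^ k` iff
`z tᵏ` is integral over `R[It]`. Hence integral closures of ideals are ideals and
`cl(Iᵃ) · cl(Iᵇ) ⊆ cl(Iᵃ⁺ᵇ)`. If `xⁿ ∈ cl(Iⁿ⁺¹)` then `x ∈ cl(I)` and so `xᵃ ∈ cl(I^(a + ⌊a/n⌋))`;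
for `xⁿ ∈ cl(Iⁿ⁺¹)` and `yᵐ ∈ cl(Iᵐ⁺¹)` every term `xⁱ yⁿ⁺ᵐ⁻ⁱ` of `(x + y)ⁿ⁺ᵐ` has `i ≥ n` or
`n + m - i ≥ m`, so lies in `cl(Iⁿ⁺ᵐ⁺¹)`: the inner integral closure is an ideal.

Its expansion to `W⁻¹R` is inside the inner integral closure of `I W⁻¹R` since integral dependence
relations map forward. Conversely, the coefficients of a relation for `r / w` over `W⁻¹R` have a
common denominator in `W`, and clearing it gives `t ∈ W` with `(t r)ⁿ ∈ cl(Iⁿ⁺¹)`, so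
`r / w = t r / (t w)` lies in the expansion.
-/

open Polynomial Finset

theorem Finset.sum_range_succ_eq_add_sum_Icc {M : Type*} [AddCommMonoid M] (f : ℕ → M) (d : ℕ) :
    ∑ j ∈ range (d + 1), f j = f 0 + ∑ j ∈ Icc 1 d, f j := by
  rw [range_eq_Ico, sum_eq_sum_Ico_succ_bot d.succ_pos]
  rfl

theorem mul_pow_add_sum_eq_pow_mul {R : Type*} [CommRing R] (s x : R) (a : ℕ → R) (d : ℕ) :
    (s * x) ^ d + ∑ j ∈ Icc 1 d, s ^ j * a j * (s * x) ^ (d - j) =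
      s ^ d * (x ^ d + ∑ j ∈ Icc 1 d, a j * x ^ (d - j)) := by
  rw [mul_add, mul_sum, mul_pow]
  congr 1
  refine sum_congr rfl fun j hj => ?_
  rw [mul_pow, ← pow_mul_pow_sub s (mem_Icc.1 hj).2]
  ring

theorem isIntegral_of_pow_add_sum_eq_zero {A B : Type*} [CommRing A] [CommRing B] [Algebra A B]
    {x : B} {d : ℕ} {b : ℕ → B} (hb : ∀ j ∈ Icc 1 d, b j ∈ (algebraMap A B).range)
    (hx : x ^ d + ∑ j ∈ Icc 1 d, b j * x ^ (d - j) = 0) : IsIntegral A x := by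
  choose! a ha using hb
  refine ⟨X ^ d + ∑ j ∈ Icc 1 d, C (a j) * X ^ (d - j), monic_X_pow_add ?_, ?_⟩
  · refine (degree_sum_le _ _).trans_lt <| (Finset.sup_lt_iff (WithBot.bot_lt_coe d)).2
      fun j hj => (degree_C_mul_X_pow_le _ _).trans_lt ?_
    exact WithBot.coe_lt_coe.2 (Nat.sub_lt_of_pos_le (mem_Icc.1 hj).1 (mem_Icc.1 hj).2)
  · rw [← hx]
    simp only [eval₂_add, eval₂_pow, eval₂_X, eval₂_finsetSum, eval₂_mul, eval₂_C]
    congr 1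
    exact sum_congr rfl fun j hj => by rw [ha j hj]

namespace Ideal

variable {R : Type*} [CommRing R]

theorem intClosure_mono {J K : Ideal R} (h : J ≤ K) : J.intClosure ⊆ K.intClosure :=
  fun _ ⟨d, a, hd, ha, hx⟩ => ⟨d, a, hd, fun j h1 h2 => pow_right_mono h j (ha j h1 h2), hx⟩

theorem mul_mem_intClosure_left {J : Ideal R} (r : R) {x : R} (hx : x ∈ J.intClosure) :
    r * x ∈ J.intClosure := by
  obtain ⟨d, a, hd, ha, hx⟩ := hx
  refine ⟨d, fun j => r ^ j * a j, hd, fun j h1 h2 => (J ^ j).mul_mem_left _ (ha j h1 h2), ?_⟩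
  rw [mul_pow_add_sum_eq_pow_mul, hx, mul_zero]

theorem map_mem_intClosure_map {S : Type*} [CommRing S] (f : R →+* S) {J : Ideal R} {x : R}
    (hx : x ∈ J.intClosure) : f x ∈ (J.map f).intClosure := by
  obtain ⟨d, a, hd, ha, hx⟩ := hx
  refine ⟨d, fun j => f (a j), hd, fun j h1 h2 => ?_, ?_⟩
  · rw [← Ideal.map_pow]
    exact mem_map_of_mem f (ha j h1 h2)
  · simpa using congrArg f hx

theorem isIntegral_monomial_of_mem_intClosure_pow (I : Ideal R) {k : ℕ} {z : R}
    (hz : z ∈ (I ^ k).intClosure) : IsIntegral (reesAlgebra I) (monomial k z) := by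
  obtain ⟨d, a, -, ha, hz⟩ := hz
  refine isIntegral_of_pow_add_sum_eq_zero (d := d) (b := fun j => monomial (k * j) (a j))
    (fun j hj => ?_) ?_
  · have : monomial (k * j) (a j) ∈ reesAlgebra I := by
      rw [reesAlgebra.monomial_mem, pow_mul]
      exact ha j (mem_Icc.1 hj).1 (mem_Icc.1 hj).2
    exact ⟨⟨_, this⟩, rfl⟩
  · have hsum : ∑ j ∈ Icc 1 d, monomial (k * j) (a j) * monomial k z ^ (d - j) =
        monomial (k * d) (∑ j ∈ Icc 1 d, a j * z ^ (d - j)) := by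
      rw [map_sum]
      refine sum_congr rfl fun j hj => ?_
      rw [monomial_pow, monomial_mul_monomial, ← mul_add, Nat.add_sub_cancel' (mem_Icc.1 hj).2]
    rw [hsum, monomial_pow, ← map_add, hz, map_zero]

theorem coeff_eval₂_monomial {I : Ideal R} (q : (reesAlgebra I)[X]) (k : ℕ) (z : R) :
    (q.eval₂ (algebraMap (reesAlgebra I) R[X]) (monomial k z)).coeff (k * q.natDegree) =
      ∑ i ∈ range (q.natDegree + 1), (q.coeff i : R[X]).coeff (k * (q.natDegree - i)) * z ^ i := by
  rw [eval₂_eq_sum_range, finsetSum_coeff]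
  refine sum_congr rfl fun i hi => ?_
  have hdeg : k * q.natDegree = k * (q.natDegree - i) + k * i := by
    rw [← mul_add, Nat.sub_add_cancel (Nat.lt_succ_iff.1 (mem_range.1 hi))]
  rw [monomial_pow, hdeg, coeff_mul_monomial]
  rfl

theorem mem_intClosure_pow_of_isIntegral_monomial (I : Ideal R) {k : ℕ} {z : R}
    (hz : IsIntegral (reesAlgebra I) (monomial k z)) : z ∈ (I ^ k).intClosure := by
  rcases subsingleton_or_nontrivial R with hR | hR
  · exact ⟨1, 0, one_pos, fun _ _ _ => zero_mem _, Subsingleton.elim _ _⟩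
  obtain ⟨q, hq, hqz⟩ := hz
  have hD : 0 < q.natDegree := by
    refine hq.natDegree_pos.2 fun h => ?_
    simp [h] at hqz
  -- the part of degree `k * deg q` of `q(z tᵏ) = 0` is a relation for `z` over the powers of `Iᵏ`
  have hcoeff := congrArg (coeff · (k * q.natDegree)) hqz
  simp only [coeff_eval₂_monomial, coeff_zero] at hcoeff
  rw [← sum_range_reflect, sum_range_succ_eq_add_sum_Icc] at hcoeff
  refine ⟨q.natDegree, fun j => (q.coeff (q.natDegree - j) : R[X]).coeff (k * j), hD,
    fun j _ _ => ?_, ?_⟩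
  · rw [← pow_mul]
    exact (mem_reesAlgebra_iff I _).1 (q.coeff _).2 _
  · rw [← hcoeff, Nat.add_sub_cancel]
    congr 1
    · simp [hq.coeff_natDegree]
    · exact sum_congr rfl fun j hj => by rw [Nat.sub_sub_self (mem_Icc.1 hj).2]

theorem mem_intClosure_pow_iff_isIntegral (I : Ideal R) {k : ℕ} {z : R} :
    z ∈ (I ^ k).intClosure ↔ IsIntegral (reesAlgebra I) (monomial k z) :=
  ⟨isIntegral_monomial_of_mem_intClosure_pow I, mem_intClosure_pow_of_isIntegral_monomial I⟩

theorem mul_mem_intClosure_pow_add (I : Ideal R) {a b : ℕ} {x y : R}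
    (hx : x ∈ (I ^ a).intClosure) (hy : y ∈ (I ^ b).intClosure) :
    x * y ∈ (I ^ (a + b)).intClosure := by
  rw [mem_intClosure_pow_iff_isIntegral] at hx hy ⊢
  rw [← monomial_mul_monomial]
  exact hx.mul hy

theorem pow_mem_intClosure_pow_mul (I : Ideal R) {a : ℕ} {x : R}
    (hx : x ∈ (I ^ a).intClosure) (q : ℕ) : x ^ q ∈ (I ^ (a * q)).intClosure := by
  rw [mem_intClosure_pow_iff_isIntegral] at hx ⊢
  rw [← monomial_pow]
  exact hx.pow q

theorem mem_intClosure_of_pow_mem_intClosure_pow (I : Ideal R) {n : ℕ} (hn : 0 < n) {x : R}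
    (hx : x ^ n ∈ (I ^ n).intClosure) : x ∈ I.intClosure := by
  have hpow : monomial n (x ^ n) = monomial 1 x ^ n := by rw [monomial_pow, one_mul]
  rw [mem_intClosure_pow_iff_isIntegral, hpow] at hx
  simpa using mem_intClosure_pow_of_isIntegral_monomial I (hx.of_pow (by omega))

theorem add_mem_intClosure {J : Ideal R} {x y : R} (hx : x ∈ J.intClosure)
    (hy : y ∈ J.intClosure) : x + y ∈ J.intClosure := by
  rw [← pow_one J, mem_intClosure_pow_iff_isIntegral] at hx hy ⊢
  rw [map_add]
  exact hx.add hy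

def intClosureIdeal (J : Ideal R) : Ideal R where
  carrier := J.intClosure
  add_mem' := add_mem_intClosure
  zero_mem' := ⟨1, 0, one_pos, fun _ _ _ => zero_mem _, by simp⟩
  smul_mem' r _ hx := mul_mem_intClosure_left r hx

theorem pow_mem_intClosure_pow_add_div (I : Ideal R) {n : ℕ} (hn : 0 < n) {x : R}
    (hx : x ^ n ∈ (I ^ (n + 1)).intClosure) (a : ℕ) : x ^ a ∈ (I ^ (a + a / n)).intClosure := by
  have hx₁ : x ∈ (I ^ 1).intClosure := by
    rw [pow_one]
    exact mem_intClosure_of_pow_mem_intClosure_pow I hn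
      (intClosure_mono (pow_le_pow_right n.le_succ) hx)
  have h := mul_mem_intClosure_pow_add I (pow_mem_intClosure_pow_mul I hx (a / n))
    (pow_mem_intClosure_pow_mul I hx₁ (a % n))
  have hexp : (n + 1) * (a / n) + 1 * (a % n) = a + a / n := by
    have := Nat.div_add_mod a n
    linarith
  rwa [← pow_mul, ← pow_add, Nat.div_add_mod, hexp] at h

theorem add_mem_innerIntClosure (I : Ideal R) {x y : R} (hx : x ∈ I.innerIntClosure)
    (hy : y ∈ I.innerIntClosure) : x + y ∈ I.innerIntClosure := by
  obtain ⟨n, hn, hxn⟩ := hx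
  obtain ⟨m, hm, hym⟩ := hy
  refine ⟨n + m, by omega, ?_⟩
  rw [add_pow]
  refine (I ^ (n + m + 1)).intClosureIdeal.sum_mem fun i hi => mul_mem_right _ _ ?_
  have hi : i ≤ n + m := Nat.lt_succ_iff.1 (mem_range.1 hi)
  have hdiv : 1 ≤ i / n + (n + m - i) / m := by
    rcases le_or_gt n i with h | h
    · exact (Nat.div_pos h hn).trans_le (Nat.le_add_right _ _)
    · exact (Nat.div_pos (by omega) hm).trans_le (Nat.le_add_left _ _)
  refine intClosure_mono (pow_le_pow_right ?_) (mul_mem_intClosure_pow_add I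
    (pow_mem_intClosure_pow_add_div I hn hxn i) (pow_mem_intClosure_pow_add_div I hm hym _))
  omega

def innerIntClosureIdeal (I : Ideal R) : Ideal R where
  carrier := I.innerIntClosure
  add_mem' := add_mem_innerIntClosure I
  zero_mem' := ⟨1, le_rfl, by rw [pow_one]; exact (I ^ (1 + 1)).intClosureIdeal.zero_mem⟩
  smul_mem' r x := fun ⟨n, hn, hx⟩ => ⟨n, hn, by
    rw [smul_eq_mul, mul_pow]
    exact mul_mem_intClosure_left _ hx⟩

theorem map_innerIntClosureIdeal_le {S : Type*} [CommRing S] (f : R →+* S) (I : Ideal R) :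
    I.innerIntClosureIdeal.map f ≤ (I.map f).innerIntClosureIdeal :=
  map_le_iff_le_comap.2 fun x ⟨n, hn, hx⟩ => ⟨n, hn, by
    rw [← map_pow, ← Ideal.map_pow]
    exact map_mem_intClosure_map f hx⟩

end Ideal

theorem IsLocalization.exists_common_denom_of_mem_map {R S : Type*} [CommRing R] [CommRing S]
    [Algebra R S] (W : Submonoid R) [IsLocalization W S] {ι : Type*} (s : Finset ι)
    (K : ι → Ideal R) {a : ι → S} (ha : ∀ i ∈ s, a i ∈ (K i).map (algebraMap R S)) :
    ∃ v ∈ W, ∀ i ∈ s, ∃ c ∈ K i, algebraMap R S v * a i = algebraMap R S c := by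
  classical
  induction s using Finset.induction_on with
  | empty => exact ⟨1, W.one_mem, by simp⟩
  | insert i s hi ih =>
    obtain ⟨v, hvW, hv⟩ := ih fun j hj => ha j (mem_insert_of_mem hj)
    obtain ⟨⟨⟨b, hb⟩, ⟨u, huW⟩⟩, hbu⟩ :=
      (IsLocalization.mem_map_algebraMap_iff W S).1 (ha i (mem_insert_self i s))
    refine ⟨u * v, W.mul_mem huW hvW, fun j hj => ?_⟩
    rcases mem_insert.1 hj with rfl | hj
    · refine ⟨v * b, (K j).mul_mem_left v hb, ?_⟩
      rw [map_mul, map_mul, ← hbu]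
      ring
    · obtain ⟨c, hc, hvc⟩ := hv j hj
      refine ⟨u * c, (K j).mul_mem_left u hc, ?_⟩
      rw [map_mul, map_mul, ← hvc]
      ring

namespace Ideal

variable {R S : Type*} [CommRing R] [CommRing S] [Algebra R S]

theorem exists_mul_mem_intClosure_of_algebraMap_mem (W : Submonoid R) [IsLocalization W S]
    (J : Ideal R) {z : R}
    (hz : algebraMap R S z ∈ (J.map (algebraMap R S)).intClosure) :
    ∃ t ∈ W, t * z ∈ J.intClosure := by
  obtain ⟨d, a, hd, ha, hz⟩ := hz
  obtain ⟨v, hvW, hv⟩ := IsLocalization.exists_common_denom_of_mem_map (S := S) W (Icc 1 d)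
    (J ^ ·) fun j hj => by rw [Ideal.map_pow]; exact ha j (mem_Icc.1 hj).1 (mem_Icc.1 hj).2
  choose! c hcJ hc using hv
  -- `v * z` satisfies the relation with coefficients `vʲ aⱼ = v ^ (j - 1) cⱼ`, but only in `S`
  set e : ℕ → R := fun j => v ^ (j - 1) * c j
  have he : algebraMap R S ((v * z) ^ d + ∑ j ∈ Icc 1 d, e j * (v * z) ^ (d - j)) = 0 := by
    have hscale := mul_pow_add_sum_eq_pow_mul (algebraMap R S v) (algebraMap R S z) a d
    rw [hz, mul_zero] at hscale
    rw [← hscale]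
    simp only [map_add, map_sum, map_mul, map_pow]
    refine congrArg _ (sum_congr rfl fun j hj => ?_)
    obtain ⟨i, rfl⟩ := Nat.exists_eq_add_of_le' (mem_Icc.1 hj).1
    simp only [e, Nat.add_sub_cancel, map_mul, map_pow]
    rw [← hc (i + 1) hj]
    ring
  obtain ⟨⟨u, huW⟩, hu⟩ := (IsLocalization.map_eq_zero_iff W S _).1 he
  refine ⟨u * v, W.mul_mem huW hvW, d, fun j => u ^ j * e j, hd,
    fun j h1 h2 => mul_mem_left _ _ (mul_mem_left _ _ (hcJ j (mem_Icc.2 ⟨h1, h2⟩))), ?_⟩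
  obtain ⟨d, rfl⟩ := Nat.exists_eq_add_of_le' hd
  rw [mul_assoc, mul_pow_add_sum_eq_pow_mul, pow_succ, mul_assoc, hu, mul_zero]

theorem innerIntClosure_map_subset (W : Submonoid R) [IsLocalization W S] (I : Ideal R) :
    (I.map (algebraMap R S)).innerIntClosure ⊆ I.innerIntClosureIdeal.map (algebraMap R S) := by
  rintro x ⟨n, hn, hx⟩
  obtain ⟨⟨r, w, hwW⟩, hrw⟩ := IsLocalization.surj W x
  have hrn : algebraMap R S (r ^ n) ∈ ((I ^ (n + 1)).map (algebraMap R S)).intClosure := by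
    rw [map_pow, ← hrw, mul_pow, mul_comm, Ideal.map_pow]
    exact mul_mem_intClosure_left _ hx
  obtain ⟨t, htW, ht⟩ := exists_mul_mem_intClosure_of_algebraMap_mem W _ hrn
  have htr : t * r ∈ I.innerIntClosure := by
    refine ⟨n, hn, ?_⟩
    obtain ⟨k, rfl⟩ := Nat.exists_eq_add_of_le' hn
    rw [mul_pow, pow_succ t, mul_assoc]
    exact mul_mem_intClosure_left _ ht
  refine (IsLocalization.mem_map_algebraMap_iff W S).2
    ⟨⟨⟨t * r, htr⟩, ⟨t * w, W.mul_mem htW hwW⟩⟩, ?_⟩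
  simp only [map_mul, ← hrw]
  ring

end Ideal

theorem stmt4_general {R : Type*} [CommRing R] (I : Ideal R)
    (W : Submonoid R) :
    (Ideal.map (algebraMap R (Localization W)) I).innerIntClosure =
      ↑(Ideal.map (algebraMap R (Localization W)) (Ideal.span I.innerIntClosure)) := by
  have hcoe : (I.innerIntClosureIdeal : Set R) = I.innerIntClosure := rfl
  rw [← hcoe, Ideal.span_eq]
  exact (Ideal.innerIntClosure_map_subset W I).antisymm
    (Ideal.map_innerIntClosureIdeal_le _ I)

/-- Inner integral closure commutes with localization: the inner integral closure of
`I·W⁻¹R` equals the expansion of the inner integral closure of `I`. -/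
theorem stmt4 {R : Type*} [CommRing R] [IsNoetherianRing R] (I : Ideal R)
    (W : Submonoid R) :
    (Ideal.map (algebraMap R (Localization W)) I).innerIntClosure =
      ↑(Ideal.map (algebraMap R (Localization W)) (Ideal.span I.innerIntClosure)) :=
  stmt4_general I W
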